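/- Let t > 0 and m > 0, let E(t,m,k) := √(m² + 4t² + 2t²·cos(2k₁) + 2t²·cos(2k₂)), and let G(q) := √(m² + 4t² + 2t²·cos(q₁) + 2t²·cos(q₂)). There exist constants C > 0 and c > 0 depending only on t and m such that for every even integer L ≥ 2 and all θ, φ ∈ ℝ, |(4/L²) · Σ_{n₁=0}^{L/2−1} Σ_{n₂=0}^{L/2−1} E(t, m, ((2πn₁+θ)/L, (2πn₂+φ)/L)) − (2π)^{−2} ∫_{[0,2π]²} G(q) dq| ≤ C·e^{−cL}; i.e. the finite-volume energy density converges to its thermodynamic limit exponentially fast, uniformly in the twist angles. -/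

import Mathlib

open Complex Finset

noncomputable def eint (m : ℤ) (x : ℝ) : ℂ := Complex.exp (m * x * I)

lemma eint_zero (x : ℝ) : eint 0 x = 1 := by simp [eint]

lemma eint_sum_zero {N : ℕ} (hN : 1 ≤ N) {m : ℤ} (hm : m ≠ 0) (hmN : m.natAbs < N) (θ : ℝ) :
    ∑ n ∈ Finset.range N, eint m ((2 * Real.pi * n + θ) / N) = 0 := by
  have hN0 : (N : ℝ) ≠ 0 := by positivity
  have hN0c : (N : ℂ) ≠ 0 := Nat.cast_ne_zero.mpr (by omega)
  set ω : ℂ := Complex.exp ((2 * Real.pi * m / N : ℝ) * I) with hω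
  have key : ∀ n ∈ Finset.range N, eint m ((2 * Real.pi * n + θ) / N)
      = Complex.exp ((m * θ / N : ℝ) * I) * ω ^ n := by
    intro n _
    rw [hω, ← Complex.exp_nat_mul, ← Complex.exp_add, eint]
    congr 1
    push_cast
    field_simp
    ring
  rw [Finset.sum_congr rfl key, ← Finset.mul_sum]
  have hω1 : ω ≠ 1 := by
    intro h
    rw [hω, Complex.exp_eq_one_iff] at h
    obtain ⟨k, hk⟩ := h
    have hk' : ((2 * Real.pi * m / N : ℝ) : ℂ) * I = ((k : ℂ) * (2 * Real.pi)) * I := by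
      rw [hk]; ring
    have hk2 : ((2 * Real.pi * m / N : ℝ) : ℂ) = ((k * (2 * Real.pi) : ℝ) : ℂ) := by
      have := mul_right_cancel₀ I_ne_zero hk'
      rw [this]; push_cast; ring
    have hre : (2 * Real.pi * m / N : ℝ) = k * (2 * Real.pi) := by exact_mod_cast hk2
    have hπ : (0:ℝ) < 2 * Real.pi := by positivity
    have hmk : (m : ℝ) = k * N := by
      field_simp at hre
      nlinarith [hre]
    have hmkz : m = k * N := by exact_mod_cast hmk
    rcases eq_or_ne k 0 with hk0 | hk0
    · exact hm (by simp [hmkz, hk0])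
    · have : N ≤ m.natAbs := by
        rw [hmkz, Int.natAbs_mul, Int.natAbs_natCast]
        have h1 : 1 ≤ k.natAbs := Int.natAbs_pos.mpr hk0
        nlinarith [h1]
      omega
  have hωN : ω ^ N = 1 := by
    rw [hω, ← Complex.exp_nat_mul]
    have : (N : ℂ) * (((2 * Real.pi * m / N : ℝ)) * I) = (m : ℂ) * (2 * Real.pi * I) := by
      push_cast
      field_simp
    rw [this]
    simpa [mul_assoc] using Complex.exp_int_mul_two_pi_mul_I m
  rw [geom_sum_eq hω1, hωN]
  simp

lemma eint_integral_zero {m : ℤ} (hm : m ≠ 0) :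
    ∫ q in (0:ℝ)..(2 * Real.pi), eint m q = 0 := by
  have hc : ((m : ℂ) * I) ≠ 0 := mul_ne_zero (Int.cast_ne_zero.mpr hm) I_ne_zero
  have : ∀ q : ℝ, eint m q = Complex.exp ((m * I) * q) := by
    intro q; rw [eint]; ring_nf
  simp_rw [this]
  rw [integral_exp_mul_complex hc]
  have h1 : ((m:ℂ) * I) * ((2 * Real.pi : ℝ) : ℂ) = (m : ℂ) * (2 * Real.pi * I) := by
    push_cast; ring
  rw [h1]
  simp [Complex.exp_int_mul_two_pi_mul_I m]

lemma eint_integral_zero' : ∫ q in (0:ℝ)..(2 * Real.pi), eint 0 q = 2 * Real.pi := by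
  simp [eint_zero]

lemma eint_continuous (m : ℤ) : Continuous (eint m) := by
  unfold eint
  fun_prop

/-- Expansion of `cos x ^ j` in complex exponentials. -/
lemma cos_pow_expand (j : ℕ) (x : ℝ) :
    ((Real.cos x : ℂ)) ^ j
      = ∑ l ∈ Finset.range (j + 1), ((j.choose l : ℂ) / 2 ^ j) * eint (2 * l - j) x := by
  have hcos : (Real.cos x : ℂ) = (Complex.exp (x * I) + Complex.exp (-x * I)) / 2 := by
    rw [Complex.ofReal_cos, eq_div_iff (two_ne_zero), mul_comm, Complex.two_cos]
  rw [hcos, div_pow, add_pow]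
  rw [Finset.sum_div]
  refine Finset.sum_congr rfl fun l hl => ?_
  have hl' : l ≤ j := Nat.lt_succ_iff.mp (Finset.mem_range.mp hl)
  have h1 : Complex.exp (x * I) ^ l = Complex.exp ((l : ℂ) * (x * I)) := by
    rw [Complex.exp_nat_mul]
  have h2 : Complex.exp (-x * I) ^ (j - l) = Complex.exp (((j - l : ℕ) : ℂ) * (-x * I)) := by
    rw [Complex.exp_nat_mul]
  rw [h1, h2, ← Complex.exp_add, eint]
  have h3 : (l : ℂ) * (x * I) + ((j - l : ℕ) : ℂ) * (-x * I) = ((2 * l - j : ℤ) : ℂ) * x * I := by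
    have : ((j - l : ℕ) : ℂ) = (j : ℂ) - (l : ℂ) := by
      push_cast [Nat.cast_sub hl']; ring
    rw [this]; push_cast; ring
  rw [h3]
  ring

/-- The key 1D lemma: shifted Riemann sums of `cos^j` are exact for `j < N`. -/
lemma cos_pow_riemann {N j : ℕ} (hN : 1 ≤ N) (hj : j < N) (θ : ℝ) :
    (2 * Real.pi) * ∑ n ∈ Finset.range N, (Real.cos ((2 * Real.pi * n + θ) / N)) ^ j
      = N * ∫ q in (0:ℝ)..(2 * Real.pi), (Real.cos q) ^ j := by
  have hsum : ∀ l, l ∈ Finset.range (j+1) →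
      ∑ n ∈ Finset.range N, eint (2 * l - j) ((2 * Real.pi * n + θ) / N)
        = if (2 * (l:ℤ) - j = 0) then (N : ℂ) else 0 := by
    intro l hl
    by_cases h : (2 * (l:ℤ) - j = 0)
    · simp only [h, if_true]
      simp [h, eint_zero]
    · simp only [h, if_false]
      apply eint_sum_zero hN h
      have hl' : l ≤ j := Nat.lt_succ_iff.mp (Finset.mem_range.mp hl)
      have : (2 * (l:ℤ) - j).natAbs ≤ j := by omega
      omega
  have hint : ∀ l, l ∈ Finset.range (j+1) →
      (∫ q in (0:ℝ)..(2 * Real.pi), eint (2 * l - j) q)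
        = if (2 * (l:ℤ) - j = 0) then ((2 * Real.pi : ℝ) : ℂ) else 0 := by
    intro l _
    by_cases h : (2 * (l:ℤ) - j = 0)
    · simp only [h, if_true]
      simp [h, eint_zero]
    · simp only [h, if_false]
      exact eint_integral_zero h
  have key : ((2 * Real.pi : ℝ) : ℂ) * ∑ n ∈ Finset.range N,
        ((Real.cos ((2 * Real.pi * n + θ) / N) : ℂ)) ^ j
      = ((N : ℝ) : ℂ) * ((∫ q in (0:ℝ)..(2 * Real.pi), (Real.cos q) ^ j : ℝ) : ℂ) := by
    calc ((2 * Real.pi : ℝ) : ℂ) * ∑ n ∈ Finset.range N, ((Real.cos ((2 * Real.pi * n + θ) / N) : ℂ)) ^ j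
        = (2 * Real.pi : ℝ) * ∑ n ∈ Finset.range N, ∑ l ∈ Finset.range (j+1),
            ((j.choose l : ℂ) / 2 ^ j) * eint (2 * l - j) ((2 * Real.pi * n + θ) / N) := by
          rw [Finset.sum_congr rfl fun n _ => cos_pow_expand j _]
      _ = (2 * Real.pi : ℝ) * ∑ l ∈ Finset.range (j+1), ((j.choose l : ℂ) / 2 ^ j) *
            ∑ n ∈ Finset.range N, eint (2 * l - j) ((2 * Real.pi * n + θ) / N) := by
          rw [Finset.sum_comm]
          simp_rw [Finset.mul_sum]
      _ = (2 * Real.pi : ℝ) * ∑ l ∈ Finset.range (j+1), ((j.choose l : ℂ) / 2 ^ j) *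
            (if (2 * (l:ℤ) - j = 0) then (N : ℂ) else 0) := by
          congr 1
          exact Finset.sum_congr rfl fun l hl => by rw [hsum l hl]
      _ = ((N : ℝ) : ℂ) * ∑ l ∈ Finset.range (j+1), ((j.choose l : ℂ) / 2 ^ j) *
            (if (2 * (l:ℤ) - j = 0) then ((2 * Real.pi : ℝ) : ℂ) else 0) := by
          rw [Finset.mul_sum, Finset.mul_sum]
          refine Finset.sum_congr rfl fun l _ => ?_
          by_cases h : (2 * (l:ℤ) - j = 0) <;> simp only [h, if_true, if_false] <;> push_cast <;> ring
      _ = ((N : ℝ) : ℂ) * ∑ l ∈ Finset.range (j+1), ((j.choose l : ℂ) / 2 ^ j) *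
            ∫ q in (0:ℝ)..(2 * Real.pi), eint (2 * l - j) q := by
          congr 1
          exact (Finset.sum_congr rfl fun l hl => by rw [hint l hl]).symm
      _ = ((N : ℝ) : ℂ) * ∫ q in (0:ℝ)..(2 * Real.pi), ∑ l ∈ Finset.range (j+1),
            ((j.choose l : ℂ) / 2 ^ j) * eint (2 * l - j) q := by
          congr 1
          rw [intervalIntegral.integral_finset_sum]
          · exact Finset.sum_congr rfl fun l _ => by
              rw [intervalIntegral.integral_const_mul]
          · intro l _
            exact (continuous_const.mul (eint_continuous _)).intervalIntegrable _ _
      _ = ((N : ℝ) : ℂ) * ∫ q in (0:ℝ)..(2 * Real.pi), ((Real.cos q : ℂ)) ^ j := by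
          congr 1
          exact (intervalIntegral.integral_congr fun q _ => cos_pow_expand j q).symm
      _ = ((N : ℝ) : ℂ) * ((∫ q in (0:ℝ)..(2 * Real.pi), (Real.cos q) ^ j : ℝ) : ℂ) := by
          congr 1
          rw [← intervalIntegral.integral_ofReal]
          push_cast
          rfl
  exact_mod_cast key

lemma sep_sum {N n : ℕ} (x y : ℕ → ℝ) :
    ∑ n₁ ∈ Finset.range N, ∑ n₂ ∈ Finset.range N, (x n₁ + y n₂) ^ n
      = ∑ j ∈ Finset.range (n+1), (n.choose j : ℝ) *
          ((∑ k ∈ Finset.range N, x k ^ j) * (∑ k ∈ Finset.range N, y k ^ (n - j))) := by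
  calc ∑ n₁ ∈ Finset.range N, ∑ n₂ ∈ Finset.range N, (x n₁ + y n₂) ^ n
      = ∑ n₁ ∈ Finset.range N, ∑ n₂ ∈ Finset.range N, ∑ j ∈ Finset.range (n+1),
          (n.choose j : ℝ) * (x n₁ ^ j * y n₂ ^ (n - j)) := by
        refine Finset.sum_congr rfl fun a _ => Finset.sum_congr rfl fun b _ => ?_
        rw [add_pow]
        exact Finset.sum_congr rfl fun j _ => by ring
    _ = ∑ n₁ ∈ Finset.range N, ∑ j ∈ Finset.range (n+1),
          (n.choose j : ℝ) * (x n₁ ^ j * ∑ n₂ ∈ Finset.range N, y n₂ ^ (n - j)) := by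
        refine Finset.sum_congr rfl fun a _ => ?_
        rw [Finset.sum_comm]
        exact Finset.sum_congr rfl fun j _ => by rw [← Finset.mul_sum, ← Finset.mul_sum]
    _ = ∑ j ∈ Finset.range (n+1), ∑ n₁ ∈ Finset.range N,
          (n.choose j : ℝ) * (x n₁ ^ j * ∑ n₂ ∈ Finset.range N, y n₂ ^ (n - j)) :=
        Finset.sum_comm
    _ = ∑ j ∈ Finset.range (n+1), (n.choose j : ℝ) *
          ((∑ k ∈ Finset.range N, x k ^ j) * (∑ k ∈ Finset.range N, y k ^ (n - j))) := by
        refine Finset.sum_congr rfl fun j _ => ?_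
        rw [Finset.sum_congr rfl (fun a (_ : a ∈ Finset.range N) => show
            (n.choose j : ℝ) * (x a ^ j * ∑ n₂ ∈ Finset.range N, y n₂ ^ (n - j))
            = ((n.choose j : ℝ) * ∑ n₂ ∈ Finset.range N, y n₂ ^ (n - j)) * x a ^ j by ring),
          ← Finset.mul_sum]
        ring

lemma sep_integral (n : ℕ) :
    (∫ q₁ in (0:ℝ)..(2 * Real.pi), ∫ q₂ in (0:ℝ)..(2 * Real.pi),
        (Real.cos q₁ + Real.cos q₂) ^ n)
      = ∑ j ∈ Finset.range (n+1), (n.choose j : ℝ) *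
          ((∫ q in (0:ℝ)..(2 * Real.pi), (Real.cos q) ^ j) *
           (∫ q in (0:ℝ)..(2 * Real.pi), (Real.cos q) ^ (n - j))) := by
  have hinner : ∀ q₁ : ℝ, (∫ q₂ in (0:ℝ)..(2 * Real.pi), (Real.cos q₁ + Real.cos q₂) ^ n)
      = ∑ j ∈ Finset.range (n+1), ((n.choose j : ℝ) * Real.cos q₁ ^ j) *
          (∫ q in (0:ℝ)..(2 * Real.pi), (Real.cos q) ^ (n - j)) := by
    intro q₁
    rw [intervalIntegral.integral_congr (g := fun q₂ => ∑ j ∈ Finset.range (n+1),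
        ((n.choose j : ℝ) * Real.cos q₁ ^ j) * (Real.cos q₂) ^ (n - j))
        (fun q₂ _ => by rw [add_pow]; exact Finset.sum_congr rfl fun j _ => by ring)]
    rw [intervalIntegral.integral_finset_sum
      (f := fun j q₂ => ((n.choose j : ℝ) * Real.cos q₁ ^ j) * (Real.cos q₂) ^ (n - j)) (fun j _ =>
      (continuous_const.mul ((Real.continuous_cos.pow _))).intervalIntegrable _ _)]
    exact Finset.sum_congr rfl fun j _ => intervalIntegral.integral_const_mul _ _
  rw [intervalIntegral.integral_congr (fun q₁ _ => hinner q₁)]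
  rw [intervalIntegral.integral_finset_sum (f := fun j q₁ => (n.choose j : ℝ) * Real.cos q₁ ^ j *
      ∫ q in (0:ℝ)..(2 * Real.pi), (Real.cos q) ^ (n - j)) (fun j _ => ((continuous_const.mul
      (Real.continuous_cos.pow _)).mul continuous_const).intervalIntegrable _ _)]
  refine Finset.sum_congr rfl fun j _ => ?_
  rw [intervalIntegral.integral_mul_const, intervalIntegral.integral_const_mul]
  ring

/-- 2D: shifted Riemann sums of `(cos q₁ + cos q₂)^n` are exact for `n < N`. -/
lemma monomial_riemann {N n : ℕ} (hN : 1 ≤ N) (hn : n < N) (θ φ : ℝ) :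
    (2 * Real.pi)^2 * ∑ n₁ ∈ Finset.range N, ∑ n₂ ∈ Finset.range N,
        (Real.cos ((2 * Real.pi * n₁ + θ) / N) + Real.cos ((2 * Real.pi * n₂ + φ) / N)) ^ n
      = (N:ℝ)^2 * ∫ q₁ in (0:ℝ)..(2 * Real.pi), ∫ q₂ in (0:ℝ)..(2 * Real.pi),
          (Real.cos q₁ + Real.cos q₂) ^ n := by
  rw [sep_sum, sep_integral, Finset.mul_sum, Finset.mul_sum]
  refine Finset.sum_congr rfl fun j hj => ?_
  have hj' : j ≤ n := Nat.lt_succ_iff.mp (Finset.mem_range.mp hj)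
  have h1 := cos_pow_riemann hN (lt_of_le_of_lt hj' hn) θ
  have h2 := cos_pow_riemann hN (lt_of_le_of_lt (Nat.sub_le n j) hn) φ
  linear_combination ((n.choose j : ℝ) * (2 * Real.pi *
      ∑ k ∈ Finset.range N, Real.cos ((2 * Real.pi * k + φ) / N) ^ (n - j))) * h1
    + ((n.choose j : ℝ) * ((N:ℝ) * ∫ q in (0:ℝ)..(2 * Real.pi), (Real.cos q) ^ j)) * h2

/-- Power series for `√(a + b s)` with geometric coefficient decay beyond ratio `1/2`. -/
lemma sqrt_series {a b : ℝ} (hb : 0 < b) (hab : 2 * b < a) :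
    ∃ (c : ℕ → ℝ) (A ρ : ℝ), 0 < A ∧ 2 < ρ ∧ (∀ n, |c n| ≤ A / ρ ^ n) ∧
      ∀ s : ℝ, |s| ≤ 2 → HasSum (fun n => c n * s ^ n) (Real.sqrt (a + b * s)) := by
  have ha : 0 < a := lt_trans (by positivity) hab
  set R : ℝ := a / b with hRdef
  have hR : 2 < R := (lt_div_iff₀ hb).mpr (by linarith)
  set ρ : ℝ := (2 + R) / 2 with hρdef
  have hρ2 : 2 < ρ := by simp only [hρdef]; linarith
  have hρR : ρ < R := by simp only [hρdef]; linarith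
  set ρ' : ℝ := (2 + ρ) / 2 with hρ'def
  have hρ'2 : 2 < ρ' := by simp only [hρ'def]; linarith
  have hρ'ρ : ρ' < ρ := by simp only [hρ'def]; linarith
  set F : ℂ → ℂ := fun z => (↑a + ↑b * z) ^ ((1 : ℂ) / 2) with hF
  have hρpos : (0:ℝ) ≤ ρ := by linarith
  set ρnn : NNReal := ⟨ρ, hρpos⟩ with hρnn
  have hdiff : DifferentiableOn ℂ F (Metric.closedBall (0:ℂ) ρnn) := by
    intro z hz
    have hz' : ‖z‖ ≤ ρ := by
      have := Metric.mem_closedBall.mp hz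
      simp [Complex.dist_eq] at this
      exact this
    have hre : 0 < (↑a + ↑b * z).re := by
      have h1 : |z.re| ≤ ‖z‖ := Complex.abs_re_le_norm z
      have h2 : (↑a + ↑b * z).re = a + b * z.re := by simp
      rw [h2]
      have : b * z.re ≥ -(b * ρ) := by nlinarith [abs_le.mp (h1.trans hz')]
      have hbρ : b * ρ < a := by
        have : b * R = a := by rw [hRdef]; field_simp
        nlinarith
      linarith
    have hslit : (↑a + ↑b * z) ∈ Complex.slitPlane := Or.inl hre
    exact (((differentiableAt_const _).add ((differentiableAt_id).const_mul _)).cpow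
      (differentiableAt_const _) hslit).differentiableWithinAt
  have hρnnpos : 0 < ρnn := by
    rw [← NNReal.coe_lt_coe]; exact lt_trans two_pos hρ2
  have hps : HasFPowerSeriesOnBall F (cauchyPowerSeries F 0 ρnn) 0 ρnn :=
    hdiff.hasFPowerSeriesOnBall hρnnpos
  set p := cauchyPowerSeries F 0 ρnn with hp
  have hρ'pos : (0:ℝ) ≤ ρ' := by linarith
  set r' : NNReal := ⟨ρ', hρ'pos⟩ with hr'
  have hrlt : (r' : ENNReal) < p.radius := by
    refine lt_of_lt_of_le ?_ hps.r_le
    exact_mod_cast (by exact_mod_cast hρ'ρ : r' < ρnn)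
  obtain ⟨Cb, hCbpos, hCb⟩ := p.norm_mul_pow_le_of_lt_radius hrlt
  refine ⟨fun n => (p.coeff n).re, Cb, ρ', hCbpos, hρ'2, ?_, ?_⟩
  · intro n
    have h1 : |(p.coeff n).re| ≤ ‖p.coeff n‖ := Complex.abs_re_le_norm _
    have h2 : ‖p.coeff n‖ ≤ ‖p n‖ := by
      have h := (p n).le_opNorm (fun _ => (1:ℂ))
      simp only [norm_one, Finset.prod_const_one, mul_one] at h
      exact h
    have h3 : ‖p n‖ * ρ' ^ n ≤ Cb := by exact_mod_cast hCb n
    have hpow : (0:ℝ) < ρ' ^ n := by positivity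
    rw [le_div_iff₀ hpow]
    calc |(p.coeff n).re| * ρ' ^ n ≤ ‖p n‖ * ρ' ^ n := by
          exact mul_le_mul_of_nonneg_right (h1.trans h2) (le_of_lt hpow)
      _ ≤ Cb := h3
  · intro s hs
    have hnn : ‖(s:ℂ)‖₊ < ρnn := by
      rw [← NNReal.coe_lt_coe, coe_nnnorm]
      have : ‖(s:ℂ)‖ = |s| := by simp [Complex.norm_real]
      rw [this]
      exact lt_of_le_of_lt hs (by exact_mod_cast hρ2)
    have hmem : (s : ℂ) ∈ Metric.eball (0:ℂ) (ρnn : ENNReal) := by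
      rw [mem_emetric_ball_zero_iff]
      exact_mod_cast hnn
    have hsum := hps.hasSum_sub hmem
    simp only [sub_zero] at hsum
    have habs : 0 ≤ a + b * s := by nlinarith [abs_le.mp hs]
    have hFs : F (s : ℂ) = ((Real.sqrt (a + b * s) : ℝ) : ℂ) := by
      show ((a:ℂ) + (b:ℂ) * (s:ℂ)) ^ ((1:ℂ)/2) = _
      rw [show (↑a + ↑b * (s:ℂ)) = ((a + b * s : ℝ) : ℂ) by push_cast; ring,
        show ((1:ℂ)/2) = ((1/2 : ℝ) : ℂ) by push_cast; ring,
        ← Complex.ofReal_cpow habs, Real.sqrt_eq_rpow]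
    rw [hFs] at hsum
    have hsum2 : HasSum (fun n => ((s:ℂ) ^ n • p.coeff n)) ((Real.sqrt (a + b * s) : ℝ) : ℂ) := by
      refine HasSum.congr_fun hsum fun n => ?_
      rw [FormalMultilinearSeries.apply_eq_pow_smul_coeff]
    have hre := Complex.hasSum_re hsum2
    simp only [Complex.ofReal_re] at hre
    have heq : (fun n => (p.coeff n).re * s ^ n) = fun n => ((s:ℂ) ^ n • p.coeff n).re := by
      funext n
      rw [smul_eq_mul, show ((s:ℂ)^n) = ((s^n : ℝ) : ℂ) by push_cast; rfl,
        Complex.re_ofReal_mul]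
      ring
    rw [heq]
    exact hre

/-- Tail bound for the series beyond the `N`-th partial sum. -/
lemma tail_bound {c : ℕ → ℝ} {A ρ : ℝ} (hA : 0 < A) (hρ : 2 < ρ)
    (hc : ∀ n, |c n| ≤ A / ρ ^ n) {s G : ℝ} (hs : |s| ≤ 2)
    (hG : HasSum (fun n => c n * s ^ n) G) (N : ℕ) :
    |G - ∑ n ∈ Finset.range N, c n * s ^ n| ≤ (A / (1 - 2 / ρ)) * (2 / ρ) ^ N := by
  set q : ℝ := 2 / ρ with hqdef
  have hρ0 : (0:ℝ) < ρ := by linarith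
  have hq0 : 0 < q := by positivity
  have hq1 : q < 1 := by rw [hqdef, div_lt_one hρ0]; linarith
  have hterm : ∀ n, |c n * s ^ n| ≤ A * q ^ n := by
    intro n
    rw [abs_mul, _root_.abs_pow]
    calc |c n| * |s| ^ n ≤ (A / ρ ^ n) * 2 ^ n := by
          apply mul_le_mul (hc n) (pow_le_pow_left₀ (abs_nonneg s) hs n)
            (by positivity) (by positivity)
      _ = A * q ^ n := by rw [hqdef, div_pow]; ring
  have hf := hG.summable
  have key := Summable.sum_add_tsum_nat_add N hf
  have htail : G - ∑ n ∈ Finset.range N, c n * s ^ n = ∑' i, c (i + N) * s ^ (i + N) := by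
    rw [← hG.tsum_eq]
    linarith [key]
  rw [htail]
  have hgs : Summable (fun i : ℕ => (A * q ^ N) * q ^ i) :=
    (summable_geometric_of_lt_one hq0.le hq1).mul_left _
  have hbd : ∀ i : ℕ, |c (i + N) * s ^ (i + N)| ≤ (A * q ^ N) * q ^ i := by
    intro i
    calc |c (i + N) * s ^ (i + N)| ≤ A * q ^ (i + N) := hterm _
      _ = (A * q ^ N) * q ^ i := by rw [pow_add]; ring
  have habs_sum : Summable (fun i : ℕ => |c (i + N) * s ^ (i + N)|) :=
    Summable.of_nonneg_of_le (fun i => abs_nonneg _) hbd hgs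
  calc |∑' i, c (i + N) * s ^ (i + N)| ≤ ∑' i, |c (i + N) * s ^ (i + N)| := by
        rw [← Real.norm_eq_abs]
        refine (norm_tsum_le_tsum_norm ?_).trans (le_of_eq ?_)
        · simpa only [Real.norm_eq_abs] using habs_sum
        · simp only [Real.norm_eq_abs]
    _ ≤ ∑' i, (A * q ^ N) * q ^ i := habs_sum.tsum_le_tsum hbd hgs
    _ = (A * q ^ N) * (1 - q)⁻¹ := by
        rw [tsum_mul_left, tsum_geometric_of_lt_one hq0.le hq1]
    _ = (A / (1 - q)) * q ^ N := by
        rw [div_eq_mul_inv]; ring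

/-- The positive-energy band of the π-flux Bloch Hamiltonian. -/
noncomputable def bandE (t m k₁ k₂ : ℝ) : ℝ :=
  Real.sqrt (m ^ 2 + 4 * t ^ 2 + 2 * t ^ 2 * Real.cos (2 * k₁)
    + 2 * t ^ 2 * Real.cos (2 * k₂))

/-- The integrand of the thermodynamic-limit energy density,
`G(q) = √(m² + 4t² + 2t²cos q₁ + 2t²cos q₂)`. -/
noncomputable def bandG (t m q₁ q₂ : ℝ) : ℝ :=
  Real.sqrt (m ^ 2 + 4 * t ^ 2 + 2 * t ^ 2 * Real.cos q₁ + 2 * t ^ 2 * Real.cos q₂)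

/-- The finite-volume energy density over any twisted Brillouin zone converges to its
thermodynamic limit exponentially fast, uniformly in the twist angles: for `t, m > 0`
there are `C, c > 0` such that for all even `L ≥ 2` and all `θ, φ`,
`|(4/L²) Σ_{n∈B_L(θ,φ)} E(t,m,k_n) − (2π)⁻² ∫_{[0,2π]²} G(q) dq| ≤ C e^{−cL}`. -/
theorem energy_density_thermodynamic_limit (t m : ℝ) (ht : 0 < t) (hm : 0 < m) :
    ∃ C > 0, ∃ c > 0, ∀ L : ℕ, Even L → 2 ≤ L → ∀ θ φ : ℝ,
      |(4 / (L : ℝ) ^ 2) *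
          ∑ n₁ ∈ Finset.range (L / 2), ∑ n₂ ∈ Finset.range (L / 2),
            bandE t m ((2 * Real.pi * n₁ + θ) / L) ((2 * Real.pi * n₂ + φ) / L)
        - (2 * Real.pi) ^ (-2 : ℤ) *
          ∫ q₁ in (0 : ℝ)..(2 * Real.pi), ∫ q₂ in (0 : ℝ)..(2 * Real.pi),
            bandG t m q₁ q₂| ≤ C * Real.exp (-c * L) := by
  set a : ℝ := m ^ 2 + 4 * t ^ 2 with hadef
  set b : ℝ := 2 * t ^ 2 with hbdef
  have hb : 0 < b := by positivity
  have hab : 2 * b < a := by simp only [hadef, hbdef]; nlinarith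
  obtain ⟨c, A, ρ, hA, hρ, hc, hsum⟩ := sqrt_series hb hab
  set q : ℝ := 2 / ρ with hqdef
  have hρ0 : (0:ℝ) < ρ := by linarith
  have hq0 : 0 < q := by positivity
  have hq1 : q < 1 := by rw [hqdef, div_lt_one hρ0]; linarith
  set K : ℝ := A / (1 - q) with hKdef
  have hK : 0 < K := div_pos hA (by linarith)
  set cc : ℝ := Real.log (ρ / 2) / 2 with hccdef
  have hcc : 0 < cc := by
    apply div_pos _ two_pos
    apply Real.log_pos
    rw [lt_div_iff₀ (by norm_num : (0:ℝ) < 2)]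
    linarith
  have hπ : (0:ℝ) < Real.pi := Real.pi_pos
  refine ⟨2 * K, by positivity, cc, hcc, ?_⟩
  intro L hLeven hL2 θ φ
  set N : ℕ := L / 2 with hNdef
  have hN1 : 1 ≤ N := by omega
  have hL2N : L = 2 * N := by
    obtain ⟨k, hk⟩ := hLeven; omega
  have hLr : (L : ℝ) = 2 * (N : ℝ) := by rw [hL2N]; push_cast; ring
  have hNr : (0:ℝ) < (N:ℝ) := by exact_mod_cast hN1
  -- pointwise tail bound
  have htail : ∀ s : ℝ, |s| ≤ 2 →
      |Real.sqrt (a + b * s) - ∑ n ∈ Finset.range N, c n * s ^ n| ≤ K * q ^ N := by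
    intro s hs
    exact tail_bound hA hρ hc hs (hsum s hs) N
  have hcos2 : ∀ u v : ℝ, |Real.cos u + Real.cos v| ≤ 2 := by
    intro u v
    calc |Real.cos u + Real.cos v| ≤ |Real.cos u| + |Real.cos v| := abs_add_le _ _
      _ ≤ 2 := by
        have := Real.abs_cos_le_one u
        have := Real.abs_cos_le_one v
        linarith
  -- abbreviations
  set S : ℝ := ∑ n₁ ∈ Finset.range N, ∑ n₂ ∈ Finset.range N,
    Real.sqrt (a + b * (Real.cos ((2 * Real.pi * n₁ + θ) / N)
      + Real.cos ((2 * Real.pi * n₂ + φ) / N))) with hSdef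
  set Sp : ℝ := ∑ n₁ ∈ Finset.range N, ∑ n₂ ∈ Finset.range N,
    ∑ n ∈ Finset.range N, c n * (Real.cos ((2 * Real.pi * n₁ + θ) / N)
      + Real.cos ((2 * Real.pi * n₂ + φ) / N)) ^ n with hSpdef
  set I : ℝ := ∫ q₁ in (0:ℝ)..(2 * Real.pi), ∫ q₂ in (0:ℝ)..(2 * Real.pi),
    Real.sqrt (a + b * (Real.cos q₁ + Real.cos q₂)) with hIdef
  set Ip : ℝ := ∫ q₁ in (0:ℝ)..(2 * Real.pi), ∫ q₂ in (0:ℝ)..(2 * Real.pi),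
    ∑ n ∈ Finset.range N, c n * (Real.cos q₁ + Real.cos q₂) ^ n with hIpdef
  -- continuity facts
  have hcont_mono : ∀ n : ℕ, Continuous fun p : ℝ × ℝ => (Real.cos p.1 + Real.cos p.2) ^ n :=
    fun n => ((Real.continuous_cos.comp continuous_fst).add
      (Real.continuous_cos.comp continuous_snd)).pow n
  have hcontG : Continuous fun p : ℝ × ℝ =>
      Real.sqrt (a + b * (Real.cos p.1 + Real.cos p.2)) :=
    Real.continuous_sqrt.comp (continuous_const.add (continuous_const.mul
      ((Real.continuous_cos.comp continuous_fst).add (Real.continuous_cos.comp continuous_snd))))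
  have hcontP : Continuous fun p : ℝ × ℝ =>
      ∑ n ∈ Finset.range N, c n * (Real.cos p.1 + Real.cos p.2) ^ n :=
    continuous_finset_sum _ fun n _ => continuous_const.mul (hcont_mono n)
  -- Step 1: |S - Sp| ≤ N^2 * (K q^N)
  have hstep1 : |S - Sp| ≤ (N:ℝ)^2 * (K * q ^ N) := by
    have hdiff : S - Sp = ∑ n₁ ∈ Finset.range N, ∑ n₂ ∈ Finset.range N,
        (Real.sqrt (a + b * (Real.cos ((2 * Real.pi * n₁ + θ) / N)
          + Real.cos ((2 * Real.pi * n₂ + φ) / N)))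
        - ∑ n ∈ Finset.range N, c n * (Real.cos ((2 * Real.pi * n₁ + θ) / N)
          + Real.cos ((2 * Real.pi * n₂ + φ) / N)) ^ n) := by
      rw [hSdef, hSpdef, ← Finset.sum_sub_distrib]
      exact Finset.sum_congr rfl fun n₁ _ => (Finset.sum_sub_distrib _ _).symm
    rw [hdiff]
    calc |∑ n₁ ∈ Finset.range N, ∑ n₂ ∈ Finset.range N, _|
        ≤ ∑ n₁ ∈ Finset.range N, |∑ n₂ ∈ Finset.range N, _| := Finset.abs_sum_le_sum_abs _ _
      _ ≤ ∑ n₁ ∈ Finset.range N, ∑ n₂ ∈ Finset.range N, (K * q ^ N) := by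
          refine Finset.sum_le_sum fun n₁ _ => ?_
          refine (Finset.abs_sum_le_sum_abs _ _).trans (Finset.sum_le_sum fun n₂ _ => ?_)
          exact htail _ (hcos2 _ _)
      _ = (N:ℝ)^2 * (K * q ^ N) := by
          simp [Finset.sum_const, Finset.card_range]
          ring
  -- Step 2: exactness for the partial sums
  have hstep2 : (2 * Real.pi)^2 * Sp = (N:ℝ)^2 * Ip := by
    have hSp_swap : Sp = ∑ n ∈ Finset.range N, c n *
        ∑ n₁ ∈ Finset.range N, ∑ n₂ ∈ Finset.range N,
          (Real.cos ((2 * Real.pi * n₁ + θ) / N) + Real.cos ((2 * Real.pi * n₂ + φ) / N)) ^ n := by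
      rw [hSpdef]
      rw [Finset.sum_congr rfl fun (n₁ : ℕ) (_ : n₁ ∈ Finset.range N) => Finset.sum_comm]
      rw [Finset.sum_comm]
      exact Finset.sum_congr rfl fun n _ => by simp_rw [← Finset.mul_sum]
    have hinner : ∀ q₁ : ℝ, (∫ q₂ in (0:ℝ)..(2 * Real.pi),
        ∑ n ∈ Finset.range N, c n * (Real.cos q₁ + Real.cos q₂) ^ n)
        = ∑ n ∈ Finset.range N, c n *
            ∫ q₂ in (0:ℝ)..(2 * Real.pi), (Real.cos q₁ + Real.cos q₂) ^ n := by
      intro q₁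
      rw [intervalIntegral.integral_finset_sum (f := fun n q₂ => c n * (Real.cos q₁ + Real.cos q₂) ^ n)
        (fun n _ =>
        (continuous_const.mul ((continuous_const.add Real.continuous_cos).pow n)).intervalIntegrable _ _)]
      exact Finset.sum_congr rfl fun n _ => intervalIntegral.integral_const_mul _ _
    have hcont_inner : ∀ n : ℕ, Continuous fun q₁ =>
        ∫ q₂ in (0:ℝ)..(2 * Real.pi), (Real.cos q₁ + Real.cos q₂) ^ n := by
      intro n
      exact intervalIntegral.continuous_parametric_intervalIntegral_of_continuous'
        (f := fun q₁ q₂ => (Real.cos q₁ + Real.cos q₂) ^ n) (μ := MeasureTheory.volume)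
        (hcont_mono n) 0 (2 * Real.pi)
    have hIp_swap : Ip = ∑ n ∈ Finset.range N, c n *
        ∫ q₁ in (0:ℝ)..(2 * Real.pi), ∫ q₂ in (0:ℝ)..(2 * Real.pi),
          (Real.cos q₁ + Real.cos q₂) ^ n := by
      rw [hIpdef]
      rw [intervalIntegral.integral_congr (fun q₁ _ => hinner q₁)]
      rw [intervalIntegral.integral_finset_sum (f := fun n q₁ => c n *
        ∫ q₂ in (0:ℝ)..(2 * Real.pi), (Real.cos q₁ + Real.cos q₂) ^ n) (fun n _ =>
        (continuous_const.mul (hcont_inner n)).intervalIntegrable _ _)]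
      exact Finset.sum_congr rfl fun n _ => intervalIntegral.integral_const_mul _ _
    rw [hSp_swap, hIp_swap, Finset.mul_sum, Finset.mul_sum]
    refine Finset.sum_congr rfl fun n hn => ?_
    have hnN : n < N := Finset.mem_range.mp hn
    have := monomial_riemann hN1 hnN θ φ
    linear_combination (c n) * this
  -- Step 3: |I - Ip| ≤ (2π)^2 * (K q^N)
  have hstep3 : |I - Ip| ≤ (2 * Real.pi)^2 * (K * q ^ N) := by
    have hGi : ∀ q₁ : ℝ, IntervalIntegrable
        (fun q₂ => Real.sqrt (a + b * (Real.cos q₁ + Real.cos q₂)))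
        MeasureTheory.volume 0 (2 * Real.pi) := by
      intro q₁
      exact (Real.continuous_sqrt.comp (continuous_const.add (continuous_const.mul
        (continuous_const.add Real.continuous_cos)))).intervalIntegrable _ _
    have hPi : ∀ q₁ : ℝ, IntervalIntegrable
        (fun q₂ => ∑ n ∈ Finset.range N, c n * (Real.cos q₁ + Real.cos q₂) ^ n)
        MeasureTheory.volume 0 (2 * Real.pi) := by
      intro q₁
      exact (continuous_finset_sum _ fun n _ => continuous_const.mul
        ((continuous_const.add Real.continuous_cos).pow n)).intervalIntegrable _ _
    have hcontIG : Continuous fun q₁ => ∫ q₂ in (0:ℝ)..(2 * Real.pi),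
        Real.sqrt (a + b * (Real.cos q₁ + Real.cos q₂)) :=
      intervalIntegral.continuous_parametric_intervalIntegral_of_continuous'
        (f := fun q₁ q₂ => Real.sqrt (a + b * (Real.cos q₁ + Real.cos q₂)))
        (μ := MeasureTheory.volume) hcontG 0 (2 * Real.pi)
    have hcontIP : Continuous fun q₁ => ∫ q₂ in (0:ℝ)..(2 * Real.pi),
        ∑ n ∈ Finset.range N, c n * (Real.cos q₁ + Real.cos q₂) ^ n :=
      intervalIntegral.continuous_parametric_intervalIntegral_of_continuous'
        (f := fun q₁ q₂ => ∑ n ∈ Finset.range N, c n * (Real.cos q₁ + Real.cos q₂) ^ n)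
        (μ := MeasureTheory.volume) hcontP 0 (2 * Real.pi)
    have hIdiff : I - Ip = ∫ q₁ in (0:ℝ)..(2 * Real.pi),
        ((∫ q₂ in (0:ℝ)..(2 * Real.pi), Real.sqrt (a + b * (Real.cos q₁ + Real.cos q₂)))
        - ∫ q₂ in (0:ℝ)..(2 * Real.pi),
            ∑ n ∈ Finset.range N, c n * (Real.cos q₁ + Real.cos q₂) ^ n) := by
      rw [hIdef, hIpdef, ← intervalIntegral.integral_sub
        (hcontIG.intervalIntegrable _ _) (hcontIP.intervalIntegrable _ _)]
    rw [hIdiff]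
    have hbd : ∀ q₁ ∈ Set.uIoc (0:ℝ) (2 * Real.pi),
        ‖(∫ q₂ in (0:ℝ)..(2 * Real.pi), Real.sqrt (a + b * (Real.cos q₁ + Real.cos q₂)))
        - ∫ q₂ in (0:ℝ)..(2 * Real.pi),
            ∑ n ∈ Finset.range N, c n * (Real.cos q₁ + Real.cos q₂) ^ n‖
        ≤ (K * q ^ N) * (2 * Real.pi) := by
      intro q₁ _
      rw [← intervalIntegral.integral_sub (hGi q₁) (hPi q₁)]
      have := intervalIntegral.norm_integral_le_of_norm_le_const
        (C := K * q ^ N) (a := (0:ℝ)) (b := 2 * Real.pi)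
        (f := fun q₂ => Real.sqrt (a + b * (Real.cos q₁ + Real.cos q₂))
          - ∑ n ∈ Finset.range N, c n * (Real.cos q₁ + Real.cos q₂) ^ n)
        (fun q₂ _ => by rw [Real.norm_eq_abs]; exact htail _ (hcos2 _ _))
      calc ‖_‖ ≤ (K * q ^ N) * |2 * Real.pi - 0| := this
        _ = (K * q ^ N) * (2 * Real.pi) := by rw [sub_zero, abs_of_pos (by positivity)]
    have := intervalIntegral.norm_integral_le_of_norm_le_const hbd
    rw [Real.norm_eq_abs] at this
    calc |_| ≤ ((K * q ^ N) * (2 * Real.pi)) * |2 * Real.pi - 0| := this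
      _ = (2 * Real.pi)^2 * (K * q ^ N) := by
          rw [sub_zero, abs_of_pos (by positivity)]; ring
  -- rewrite the goal
  have hgoalsum : (∑ n₁ ∈ Finset.range N, ∑ n₂ ∈ Finset.range N,
      bandE t m ((2 * Real.pi * n₁ + θ) / L) ((2 * Real.pi * n₂ + φ) / L)) = S := by
    rw [hSdef]
    refine Finset.sum_congr rfl fun n₁ _ => Finset.sum_congr rfl fun n₂ _ => ?_
    unfold bandE
    have harg : ∀ ψ : ℝ, ∀ k : ℕ, 2 * ((2 * Real.pi * k + ψ) / L) = (2 * Real.pi * k + ψ) / N := by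
      intro ψ k
      rw [hLr]
      field_simp
    rw [harg θ n₁, harg φ n₂]
    congr 1
    simp only [hadef, hbdef]
    ring
  have hgoalint : (∫ q₁ in (0:ℝ)..(2 * Real.pi), ∫ q₂ in (0:ℝ)..(2 * Real.pi),
      bandG t m q₁ q₂) = I := by
    rw [hIdef]
    refine intervalIntegral.integral_congr fun q₁ _ => ?_
    refine intervalIntegral.integral_congr fun q₂ _ => ?_
    unfold bandG
    congr 1
    simp only [hadef, hbdef]
    ring
  rw [hgoalsum, hgoalint]
  have h4L : 4 / (L:ℝ)^2 = 1 / (N:ℝ)^2 := by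
    rw [hLr]
    field_simp
    ring
  have hzpow : (2 * Real.pi) ^ (-2 : ℤ) = 1 / (2 * Real.pi)^2 := by
    rw [show ((-2:ℤ)) = -((2:ℕ):ℤ) from rfl, zpow_neg, zpow_natCast, one_div]
  rw [h4L, hzpow]
  -- final arithmetic
  have hmid : Sp / (N:ℝ)^2 = Ip / (2 * Real.pi)^2 := by
    rw [div_eq_div_iff (by positivity) (by positivity)]
    linarith [hstep2]
  have hqN : q ^ N = Real.exp (-cc * L) := by
    have h1 : q ^ N = Real.exp ((N:ℝ) * Real.log q) := by
      rw [Real.exp_nat_mul, Real.exp_log hq0]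
    rw [h1]
    congr 1
    have hlogq : Real.log q = -(Real.log (ρ / 2)) := by
      rw [hqdef, ← inv_div, Real.log_inv]
    rw [hlogq, hccdef, hLr]
    ring
  have hiden : 1 / (N:ℝ)^2 * S - 1 / (2 * Real.pi)^2 * I
      = (S - Sp) / (N:ℝ)^2 + (Ip - I) / (2 * Real.pi)^2 := by
    linear_combination hmid
  calc |1 / (N:ℝ)^2 * S - 1 / (2 * Real.pi)^2 * I|
      = |(S - Sp) / (N:ℝ)^2 + (Ip - I) / (2 * Real.pi)^2| := by rw [hiden]
    _ ≤ |(S - Sp) / (N:ℝ)^2| + |(Ip - I) / (2 * Real.pi)^2| := abs_add_le _ _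
    _ = |S - Sp| / (N:ℝ)^2 + |Ip - I| / (2 * Real.pi)^2 := by
        rw [abs_div, abs_div,
          abs_of_pos (show (0:ℝ) < (N:ℝ)^2 by positivity),
          abs_of_pos (show (0:ℝ) < (2 * Real.pi)^2 by positivity)]
    _ ≤ ((N:ℝ)^2 * (K * q ^ N)) / (N:ℝ)^2 + ((2 * Real.pi)^2 * (K * q ^ N)) / (2 * Real.pi)^2 := by
        have h3 : |Ip - I| ≤ (2 * Real.pi)^2 * (K * q ^ N) := by
          rw [abs_sub_comm]; exact hstep3
        gcongr
    _ = 2 * (K * q ^ N) := by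
        field_simp
        ring
    _ = 2 * K * Real.exp (-cc * L) := by rw [hqN]; ring
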